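/- arXiv:1805.00205 — 3 statements merged into one kernel-verified Lean document; each statement's English description precedes it below -/
import Mathlib

section
/- Let X be a random vector in ℝ^d taking values in the positive orthant almost surely, let B be a convex set of portfolio weight vectors, and let b* ∈ B maximize the expected logarithmic rate of return r(b) = E[log(bᵀX)] over B, with E[log(b*ᵀX)] finite. Then for every b ∈ B such that E[log(bᵀX)] is finite and E[bᵀX / b*ᵀX] exists, one has E[bᵀX / b*ᵀX] ≤ 1. -/
open MeasureTheory Matrix Filter Topology

/-- The function `l ↦ log((1-l)s + lt)` is concave on `[0,1]` when `s, t > 0`. -/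
lemma combo_pos {s t x : ℝ} (hs : 0 < s) (ht : 0 < t) (hx0 : 0 ≤ x) (hx1 : x ≤ 1) :
    0 < (1-x)*s + x*t := by
  rcases le_total s t with h | h
  · nlinarith [mul_nonneg hx0 (sub_nonneg.2 h)]
  · nlinarith [mul_nonneg (sub_nonneg.2 hx1) (sub_nonneg.2 h)]

lemma concave_aux {s t : ℝ} (hs : 0 < s) (ht : 0 < t) :
    ConcaveOn ℝ (Set.Icc (0:ℝ) 1) (fun l => Real.log ((1-l)*s + l*t)) := by
  refine ⟨convex_Icc 0 1, ?_⟩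
  intro x hx y hy a c ha hc hac
  have hx' : 0 < (1-x)*s + x*t := combo_pos hs ht hx.1 hx.2
  have hy' : 0 < (1-y)*s + y*t := combo_pos hs ht hy.1 hy.2
  have hlog := (strictConcaveOn_log_Ioi.concaveOn).2 (Set.mem_Ioi.2 hx')
    (Set.mem_Ioi.2 hy') ha hc hac
  simp only [smul_eq_mul] at hlog ⊢
  have harg : (1 - (a*x + c*y)) * s + (a*x + c*y) * t
      = a * ((1-x)*s + x*t) + c * ((1-y)*s + y*t) := by
    linear_combination (-s) * hac
  rw [harg]
  exact hlog

/-- Slope comparison for the concave function `l ↦ log((1-l)s + lt)` at `0`. -/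
lemma slope_aux {s t : ℝ} (hs : 0 < s) (ht : 0 < t) {a c : ℝ}
    (ha : 0 < a) (hac : a ≤ c) (hc1 : c ≤ 1) :
    (Real.log ((1-c)*s + c*t) - Real.log s) / c
      ≤ (Real.log ((1-a)*s + a*t) - Real.log s) / a := by
  have hanti := (concave_aux hs ht).slope_anti
    (Set.mem_Icc.2 ⟨le_refl 0, zero_le_one⟩)
  have hamem : a ∈ Set.Icc (0:ℝ) 1 \ {0} :=
    ⟨Set.mem_Icc.2 ⟨ha.le, hac.trans hc1⟩, ha.ne'⟩
  have hcmem : c ∈ Set.Icc (0:ℝ) 1 \ {0} :=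
    ⟨Set.mem_Icc.2 ⟨(ha.trans_le hac).le, hc1⟩, (ha.trans_le hac).ne'⟩
  have := hanti hamem hcmem hac
  simp only [slope_def_field, sub_zero] at this
  norm_num at this
  convert this using 3 <;> ring

/-- The slope of `l ↦ log((1-l)s + lt)` at `0` along `1/(n+2)` tends to `t/s - 1`. -/
lemma tendsto_aux {s t : ℝ} (hs : 0 < s) (ht : 0 < t) :
    Tendsto (fun n : ℕ =>
      (Real.log ((1-((n:ℝ)+2)⁻¹)*s + ((n:ℝ)+2)⁻¹*t) - Real.log s) / ((n:ℝ)+2)⁻¹)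
      atTop (𝓝 (t/s - 1)) := by
  have hfun : (fun l : ℝ => (1-l)*s + l*t) = fun l : ℝ => s + l*(t-s) := by
    funext l; ring
  have hderiv : HasDerivAt (fun l : ℝ => Real.log ((1-l)*s + l*t)) ((t-s)/s) 0 := by
    have h1 : HasDerivAt (fun l : ℝ => (1-l)*s + l*t) (t-s) 0 := by
      rw [hfun]
      simpa using ((hasDerivAt_id (0:ℝ)).mul_const (t-s)).const_add s
    have h2 : ((1:ℝ)-0)*s + 0*t ≠ 0 := by simpa using hs.ne'
    have h3 := h1.log h2
    convert h3 using 1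
    norm_num
  have hslope := hasDerivAt_iff_tendsto_slope.mp hderiv
  have hts : (t-s)/s = t/s - 1 := by field_simp
  rw [hts] at hslope
  have hlam : Tendsto (fun n : ℕ => ((n:ℝ)+2)⁻¹) atTop (𝓝[≠] (0:ℝ)) := by
    rw [tendsto_nhdsWithin_iff]
    constructor
    · have : Tendsto (fun n : ℕ => (n:ℝ)+2) atTop atTop :=
        tendsto_atTop_add_const_right _ 2 tendsto_natCast_atTop_atTop
      exact tendsto_inv_atTop_zero.comp this
    · refine Eventually.of_forall fun n => ?_
      have : (0:ℝ) < ((n:ℝ)+2)⁻¹ := by positivity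
      simpa using this.ne'
  have := hslope.comp hlam
  have heq : ∀ n : ℕ,
      slope (fun l : ℝ => Real.log ((1-l)*s + l*t)) 0 (((n:ℝ)+2)⁻¹)
        = (Real.log ((1-((n:ℝ)+2)⁻¹)*s + ((n:ℝ)+2)⁻¹*t) - Real.log s) / ((n:ℝ)+2)⁻¹ := by
    intro n
    simp only [slope_def_field, sub_zero]
    norm_num
  exact this.congr heq

/-- Log of a convex combination is bounded. -/
lemma abs_log_combo_le {s t l : ℝ} (hs : 0 < s) (ht : 0 < t)
    (hl0 : 0 ≤ l) (hl1 : l ≤ 1) :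
    |Real.log ((1-l)*s + l*t)| ≤ |Real.log s| + |Real.log t| + Real.log 2 := by
  have hpos : 0 < (1-l)*s + l*t := combo_pos hs ht hl0 hl1
  have hlog2 : (0:ℝ) ≤ Real.log 2 := Real.log_nonneg (by norm_num)
  rw [abs_le]
  constructor
  · -- lower bound via concavity
    have hconc := (concave_aux hs ht).2 (Set.mem_Icc.2 ⟨le_refl 0, zero_le_one⟩)
      (Set.mem_Icc.2 ⟨zero_le_one, le_refl 1⟩) (by linarith : (0:ℝ) ≤ 1 - l) hl0
      (by ring)
    simp only [smul_eq_mul, mul_zero, mul_one, zero_add] at hconc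
    norm_num at hconc
    -- hconc : (1-l) * log s + l * log t ≤ log ((1-l)*s + l*t)
    have h1 : -|Real.log s| ≤ (1-l) * Real.log s := by
      nlinarith [neg_abs_le (Real.log s), le_abs_self (Real.log s), abs_nonneg (Real.log s)]
    have h2 : -|Real.log t| ≤ l * Real.log t := by
      nlinarith [neg_abs_le (Real.log t), le_abs_self (Real.log t), abs_nonneg (Real.log t)]
    linarith
  · -- upper bound
    have hmax : 0 < max s t := lt_max_of_lt_left hs
    have h1 : Real.log ((1-l)*s + l*t) ≤ Real.log (2 * max s t) := by
      apply Real.log_le_log hpos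
      nlinarith [le_max_left s t, le_max_right s t]
    rw [Real.log_mul (by norm_num) hmax.ne'] at h1
    have h2 : Real.log (max s t) ≤ |Real.log s| + |Real.log t| := by
      rcases le_total s t with h | h
      · rw [max_eq_right h]
        nlinarith [le_abs_self (Real.log t), abs_nonneg (Real.log s)]
      · rw [max_eq_left h]
        nlinarith [le_abs_self (Real.log s), abs_nonneg (Real.log t)]
    linarith

/-- Cover's inequality: if `bstar` is log-optimal over a convex set `B` of portfolio
weight vectors, then for every `b ∈ B` whose expected log-return is finite and such that
`E[bᵀX / bstarᵀX]` exists, one has `E[bᵀX / bstarᵀX] ≤ 1`. -/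
theorem log_optimal_ratio_expectation_le_one
    {Ω : Type*} [MeasureSpace Ω] [IsProbabilityMeasure (volume : Measure Ω)]
    {d : ℕ} (X : Ω → Fin d → ℝ) (hXmeas : Measurable X)
    (hXpos : ∀ᵐ ω, ∀ i, 0 < X ω i)
    (B : Set (Fin d → ℝ)) (hBconv : Convex ℝ B)
    (hBpos : ∀ b ∈ B, ∀ᵐ ω, 0 < b ⬝ᵥ X ω)
    (bstar : Fin d → ℝ) (hbstar : bstar ∈ B)
    (hbstar_int : Integrable (fun ω => Real.log (bstar ⬝ᵥ X ω)))
    (hopt : ∀ b ∈ B, Integrable (fun ω => Real.log (b ⬝ᵥ X ω)) →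
      ∫ ω, Real.log (b ⬝ᵥ X ω) ≤ ∫ ω, Real.log (bstar ⬝ᵥ X ω))
    (b : Fin d → ℝ) (hb : b ∈ B)
    (hb_int : Integrable (fun ω => Real.log (b ⬝ᵥ X ω)))
    (hratio_int : Integrable (fun ω => (b ⬝ᵥ X ω) / (bstar ⬝ᵥ X ω))) :
    ∫ ω, (b ⬝ᵥ X ω) / (bstar ⬝ᵥ X ω) ≤ 1 := by
  -- the sequence of mixing parameters
  set lam : ℕ → ℝ := fun n => ((n:ℝ)+2)⁻¹ with hlam_def
  have hlam_pos : ∀ n, 0 < lam n := fun n => by positivity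
  have hlam_le_one : ∀ n, lam n ≤ 1 := by
    intro n
    rw [hlam_def]
    apply inv_le_one_of_one_le₀
    linarith [Nat.cast_nonneg (α := ℝ) n]
  have hlam_anti : ∀ n, lam (n+1) ≤ lam n := by
    intro n
    apply inv_anti₀ (by positivity)
    push_cast; linarith
  -- mixed portfolios
  set bn : ℕ → Fin d → ℝ := fun n => (1 - lam n) • bstar + lam n • b with hbn_def
  have hbnB : ∀ n, bn n ∈ B := fun n =>
    hBconv hbstar hb (by linarith [hlam_le_one n]) (hlam_pos n).le (by ring)
  have hdot : ∀ n ω, bn n ⬝ᵥ X ω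
      = (1 - lam n) * (bstar ⬝ᵥ X ω) + lam n * (b ⬝ᵥ X ω) := by
    intro n ω
    simp [hbn_def, add_dotProduct, smul_dotProduct, smul_eq_mul]
  -- a.e. positivity
  have hae : ∀ᵐ ω, 0 < bstar ⬝ᵥ X ω ∧ 0 < b ⬝ᵥ X ω :=
    (hBpos bstar hbstar).and (hBpos b hb)
  -- measurability of dot products
  have hdot_meas : ∀ v : Fin d → ℝ, Measurable fun ω => v ⬝ᵥ X ω := by
    intro v
    apply Finset.measurable_sum
    intro i _
    exact measurable_const.mul ((measurable_pi_apply i).comp hXmeas)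
  -- integrability of log of mixed portfolios
  have hLn_int : ∀ n, Integrable (fun ω => Real.log (bn n ⬝ᵥ X ω)) := by
    intro n
    apply Integrable.mono'
      ((hbstar_int.abs.add hb_int.abs).add (integrable_const (Real.log 2)))
    · exact (Real.measurable_log.comp (hdot_meas (bn n))).aestronglyMeasurable
    · filter_upwards [hae] with ω ⟨hs, ht⟩
      rw [Real.norm_eq_abs, hdot]
      exact abs_log_combo_le hs ht (hlam_pos n).le (hlam_le_one n)
  -- the slope sequence
  set G : ℕ → Ω → ℝ := fun n ω =>
    (Real.log (bn n ⬝ᵥ X ω) - Real.log (bstar ⬝ᵥ X ω)) / lam n with hG_def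
  have hG_int : ∀ n, Integrable (G n) := fun n =>
    ((hLn_int n).sub hbstar_int).div_const (lam n)
  -- each integral is ≤ 0
  have hG_nonpos : ∀ n, ∫ ω, G n ω ≤ 0 := by
    intro n
    rw [hG_def]
    simp only
    rw [integral_div, integral_sub (hLn_int n) hbstar_int]
    apply div_nonpos_of_nonpos_of_nonneg
    · linarith [hopt (bn n) (hbnB n) (hLn_int n)]
    · exact (hlam_pos n).le
  -- monotonicity a.e.
  have hG_mono : ∀ᵐ ω, Monotone fun n => G n ω := by
    filter_upwards [hae] with ω ⟨hs, ht⟩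
    apply monotone_nat_of_le_succ
    intro n
    simp only [hG_def, hdot]
    exact slope_aux hs ht (hlam_pos (n+1)) (hlam_anti n) (hlam_le_one n)
  -- pointwise limit a.e.
  set F : Ω → ℝ := fun ω => (b ⬝ᵥ X ω) / (bstar ⬝ᵥ X ω) - 1 with hF_def
  have hF_int : Integrable F := hratio_int.sub (integrable_const 1)
  have hG_tendsto : ∀ᵐ ω, Tendsto (fun n => G n ω) atTop (𝓝 (F ω)) := by
    filter_upwards [hae] with ω ⟨hs, ht⟩
    have := tendsto_aux hs ht
    simp only [hG_def, hF_def, hdot]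
    exact this
  -- monotone convergence
  have hconv := integral_tendsto_of_tendsto_of_monotone hG_int hF_int hG_mono hG_tendsto
  have hFle : ∫ ω, F ω ≤ 0 := le_of_tendsto hconv (Eventually.of_forall hG_nonpos)
  rw [hF_def] at hFle
  rw [integral_sub hratio_int (integrable_const 1)] at hFle
  simp [integral_const] at hFle
  linarith
end

section
/- Let S₀ > 0, let (X_i)_{i≥1} be random price-fluctuation vectors in ℝ^d taking values in the positive orthant, and let (b_i)_{i≥1} and (b_i*)_{i≥1} be sequences of portfolio weight vectors (possibly random) with b_iᵀX_i > 0 and b_i*ᵀX_i > 0 almost surely. Define S_n = S₀ ∏_{i=1}^n b_iᵀX_i and S_n* = S₀ ∏_{i=1}^n b_i*ᵀX_i. If E[S_n/S_n*] ≤ 1 for every n, then with probability 1 there exists N such that for all n > N, (1/n) log(S_n/S_n*) ≤ (2 log n)/n; in particular lim sup_{n→∞} (1/n) log(S_n/S_n*) ≤ 0 almost surely, so the log-optimal wealth S_n* is asymptotically superior to S_n. -/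
open MeasureTheory Matrix Filter

set_option maxHeartbeats 800000

/-- Asymptotic superiority of the log-optimal wealth: if `S n = S₀ ∏_{i=1}^n bᵢᵀXᵢ` and
`Ss n = S₀ ∏_{i=1}^n bᵢ*ᵀXᵢ` satisfy `E[S n / Ss n] ≤ 1` for every `n`, then almost surely
there is `N` with `(1/n) log (S n / Ss n) ≤ (2 log n)/n` for all `n > N`; in particular
`limsup (1/n) log (S n / Ss n) ≤ 0` almost surely. -/
theorem log_optimal_asymptotically_superior
    {Ω : Type*} [MeasureSpace Ω] [IsProbabilityMeasure (volume : Measure Ω)]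
    {d : ℕ} (S₀ : ℝ) (hS₀ : 0 < S₀)
    (X : ℕ → Ω → Fin d → ℝ) (b bs : ℕ → Ω → Fin d → ℝ)
    (hXmeas : ∀ i, Measurable (X i)) (hbmeas : ∀ i, Measurable (b i))
    (hbsmeas : ∀ i, Measurable (bs i))
    (hXpos : ∀ i, ∀ᵐ ω, ∀ j, 0 < X i ω j)
    (hbpos : ∀ i, ∀ᵐ ω, 0 < b i ω ⬝ᵥ X i ω)
    (hbspos : ∀ i, ∀ᵐ ω, 0 < bs i ω ⬝ᵥ X i ω)
    (S Ss : ℕ → Ω → ℝ)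
    (hS : ∀ n ω, S n ω = S₀ * ∏ i ∈ Finset.Icc 1 n, b i ω ⬝ᵥ X i ω)
    (hSs : ∀ n ω, Ss n ω = S₀ * ∏ i ∈ Finset.Icc 1 n, bs i ω ⬝ᵥ X i ω)
    (hE : ∀ n, ∫⁻ ω, ENNReal.ofReal (S n ω / Ss n ω) ≤ 1) :
    ∀ᵐ ω,
      (∃ N : ℕ, ∀ n > N, (1 / n : ℝ) * Real.log (S n ω / Ss n ω) ≤ 2 * Real.log n / n) ∧
      Filter.limsup (fun n : ℕ => (1 / n : ℝ) * Real.log (S n ω / Ss n ω)) atTop ≤ 0 := by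
  -- measurability of the ratio
  have hdot : ∀ (c : ℕ → Ω → Fin d → ℝ), (∀ i, Measurable (c i)) → ∀ i,
      Measurable fun ω => c i ω ⬝ᵥ X i ω := by
    intro c hc i
    simp only [dotProduct]
    exact Finset.measurable_sum _ fun j _ =>
      ((measurable_pi_apply j).comp (hc i)).mul ((measurable_pi_apply j).comp (hXmeas i))
  have hSmeas : ∀ n, Measurable (S n) := by
    intro n
    have : S n = fun ω => S₀ * ∏ i ∈ Finset.Icc 1 n, b i ω ⬝ᵥ X i ω := funext (hS n)
    rw [this]
    exact measurable_const.mul (Finset.measurable_prod _ fun i _ => hdot b hbmeas i)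
  have hSsmeas : ∀ n, Measurable (Ss n) := by
    intro n
    have : Ss n = fun ω => S₀ * ∏ i ∈ Finset.Icc 1 n, bs i ω ⬝ᵥ X i ω := funext (hSs n)
    rw [this]
    exact measurable_const.mul (Finset.measurable_prod _ fun i _ => hdot bs hbsmeas i)
  have hYmeas : ∀ n, Measurable fun ω => S n ω / Ss n ω := fun n => (hSmeas n).div (hSsmeas n)
  -- the bad sets
  set A : ℕ → Set Ω := fun n => {ω | ((n : ℝ))^2 ≤ S n ω / Ss n ω} with hA
  -- Markov bound
  have hAbound : ∀ n : ℕ, 1 ≤ n → volume (A n) ≤ ENNReal.ofReal (1 / (n : ℝ)^2) := by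
    intro n hn
    have hnpos : (0:ℝ) < (n:ℝ)^2 := by positivity
    have hsub : A n ⊆ {ω | ENNReal.ofReal ((n:ℝ)^2) ≤ ENNReal.ofReal (S n ω / Ss n ω)} :=
      fun ω hω => ENNReal.ofReal_le_ofReal hω
    have hmark := mul_meas_ge_le_lintegral₀ (μ := volume)
      (f := fun ω => ENNReal.ofReal (S n ω / Ss n ω))
      (ENNReal.measurable_ofReal.comp (hYmeas n)).aemeasurable (ENNReal.ofReal ((n:ℝ)^2))
    have h1 : ENNReal.ofReal ((n:ℝ)^2) * volume (A n) ≤ 1 :=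
      le_trans (mul_le_mul_right (measure_mono hsub) _) (le_trans hmark (hE n))
    have hne : ENNReal.ofReal ((n:ℝ)^2) ≠ 0 := by
      simp [ENNReal.ofReal_eq_zero, not_le, hnpos]; omega
    have hnetop : ENNReal.ofReal ((n:ℝ)^2) ≠ ⊤ := ENNReal.ofReal_ne_top
    rw [mul_comm] at h1
    have h2 : volume (A n) ≤ 1 / ENNReal.ofReal ((n:ℝ)^2) :=
      (ENNReal.le_div_iff_mul_le (Or.inl hne) (Or.inl hnetop)).mpr h1
    refine h2.trans_eq ?_
    rw [ENNReal.ofReal_div_of_pos hnpos, ENNReal.ofReal_one]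
  -- summability
  have hsum : ∑' n, volume (A n) ≠ ⊤ := by
    rw [tsum_eq_zero_add' ENNReal.summable]
    have hsummable : Summable fun n : ℕ => 1 / ((n + 1 : ℕ) : ℝ)^2 := by
      have := (Real.summable_one_div_nat_pow (p := 2)).mpr one_lt_two
      exact (summable_nat_add_iff 1).mpr this
    have htail : ∑' n : ℕ, volume (A (n + 1)) ≤
        ∑' n : ℕ, ENNReal.ofReal (1 / ((n + 1 : ℕ) : ℝ)^2) :=
      ENNReal.tsum_le_tsum fun n => hAbound (n + 1) (Nat.le_add_left 1 n)
    have hfin : ∑' n : ℕ, ENNReal.ofReal (1 / ((n + 1 : ℕ) : ℝ)^2) ≠ ⊤ := by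
      rw [← ENNReal.ofReal_tsum_of_nonneg (fun n => by positivity) hsummable]
      exact ENNReal.ofReal_ne_top
    exact ENNReal.add_ne_top.mpr ⟨(measure_lt_top _ _).ne, (lt_of_le_of_lt htail hfin.lt_top).ne⟩
  -- Borel–Cantelli
  have hBC : volume (limsup A atTop) = 0 := measure_limsup_atTop_eq_zero hsum
  have hae1 : ∀ᵐ ω, ω ∉ limsup A atTop := by
    rw [ae_iff]
    simpa using hBC
  -- positivity a.e.
  have hae2 : ∀ᵐ ω, ∀ i, 0 < b i ω ⬝ᵥ X i ω ∧ 0 < bs i ω ⬝ᵥ X i ω := by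
    rw [ae_all_iff]
    exact fun i => (hbpos i).and (hbspos i)
  filter_upwards [hae1, hae2] with ω hω hpos
  have hSpos : ∀ n, 0 < S n ω := fun n => by
    rw [hS]
    exact mul_pos hS₀ (Finset.prod_pos fun i _ => (hpos i).1)
  have hSspos : ∀ n, 0 < Ss n ω := fun n => by
    rw [hSs]
    exact mul_pos hS₀ (Finset.prod_pos fun i _ => (hpos i).2)
  -- eventual bound
  have hfreq : ∀ᶠ n in atTop, ω ∉ A n :=
    Filter.not_frequently.mp fun h => hω (mem_limsup_iff_frequently_mem.mpr h)
  obtain ⟨M, hM⟩ := Filter.eventually_atTop.mp hfreq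
  have hkey : ∀ n > max M 1, (1 / n : ℝ) * Real.log (S n ω / Ss n ω) ≤ 2 * Real.log n / n := by
    intro n hn
    have hnM : M ≤ n := le_trans (le_max_left M 1) hn.le
    have hn1 : (1:ℕ) ≤ n := le_trans (le_max_right M 1) hn.le
    have hnR : (0:ℝ) < n := by exact_mod_cast hn1
    have hY : 0 < S n ω / Ss n ω := div_pos (hSpos n) (hSspos n)
    have hlt : S n ω / Ss n ω ≤ (n:ℝ)^2 := le_of_not_ge (hM n hnM)
    have hlog : Real.log (S n ω / Ss n ω) ≤ 2 * Real.log n := by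
      calc Real.log (S n ω / Ss n ω) ≤ Real.log ((n:ℝ)^2) := Real.log_le_log hY hlt
        _ = 2 * Real.log n := by rw [Real.log_pow]; push_cast; ring
    calc (1 / n : ℝ) * Real.log (S n ω / Ss n ω) ≤ (1 / n : ℝ) * (2 * Real.log n) :=
          mul_le_mul_of_nonneg_left hlog (by positivity)
      _ = 2 * Real.log n / n := by ring
  refine ⟨⟨max M 1, hkey⟩, ?_⟩
  -- limsup part
  have hg0 : Tendsto (fun n : ℕ => 2 * Real.log n / n) atTop (nhds 0) := by
    have h1 : Tendsto (fun x : ℝ => Real.log x ^ 1 / (1 * x + 0)) atTop (nhds 0) :=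
      Real.tendsto_pow_log_div_mul_add_atTop 1 0 1 one_ne_zero
    have h2 : Tendsto (fun x : ℝ => 2 * Real.log x / x) atTop (nhds 0) := by
      have := h1.const_mul 2
      simp only [mul_zero] at this
      refine this.congr fun x => by ring
    exact h2.comp tendsto_natCast_atTop_atTop
  have hle : ∀ᶠ n : ℕ in atTop, (1 / n : ℝ) * Real.log (S n ω / Ss n ω) ≤ 2 * Real.log n / n := by
    filter_upwards [Filter.eventually_gt_atTop (max M 1)] with n hn using hkey n hn
  by_cases hcb : IsCoboundedUnder (· ≤ ·) atTop
      fun n : ℕ => (1 / n : ℝ) * Real.log (S n ω / Ss n ω)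
  · have h0 : ∀ ε : ℝ, 0 < ε →
        Filter.limsup (fun n : ℕ => (1 / n : ℝ) * Real.log (S n ω / Ss n ω)) atTop ≤ ε := by
      intro ε hε
      refine Filter.limsup_le_of_le hcb ?_
      have hg' : ∀ᶠ n : ℕ in atTop, 2 * Real.log n / n < ε :=
        hg0.eventually (gt_mem_nhds hε)
      filter_upwards [hle, hg'] with n h1 h2 using h1.trans h2.le
    refine le_of_forall_pos_le_add fun ε hε => ?_
    simpa using h0 ε hε
  · rw [Filter.limsup_eq, Real.sInf_of_not_bddBelow]
    intro ⟨c, hc⟩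
    exact hcb ⟨c, fun a ha => hc (Filter.eventually_map.mp ha)⟩
end

section
/- Let μ ∈ ℝ^d, let Σ and Σ̂ be real d×d matrices, let c > 0, and let b̂ ∈ ℝ^d satisfy b̂ᵀμ ≥ c. Writing σ_{ij} for the entries of Σ − Σ̂ and M(b, μ, Σ) = log(bᵀμ) − bᵀΣb/(2(bᵀμ)²) for the Allocation Utility, the deviation of the estimated Allocation Utility satisfies |M(b̂, μ, Σ̂) − M(b̂, μ, Σ)| ≤ (1/(2c²)) · (∑_{i=1}^d |b̂_i|)² · max_i ∑_{j=1}^d |σ_{ij}|. -/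
open Matrix

/-- The Allocation Utility of the Robust Log-Optimal Strategy:
`M(b, μ, Σ) = log(bᵀμ) − bᵀΣb / (2(bᵀμ)²)`. -/
noncomputable def allocationUtility {d : ℕ} (b μ : Fin d → ℝ)
    (Sig : Matrix (Fin d) (Fin d) ℝ) : ℝ :=
  Real.log (b ⬝ᵥ μ) - b ⬝ᵥ (Sig *ᵥ b) / (2 * (b ⬝ᵥ μ) ^ 2)

/-- Robustness of the Robust Log-Optimal Strategy: if `b̂ᵀμ ≥ c > 0`, the deviation of the
Allocation Utility under the covariance estimator `Σ̂` from that under the true covariance `Σ`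
is bounded by `(1/(2c²)) · (∑ᵢ |b̂ᵢ|)² · maxᵢ ∑ⱼ |σᵢⱼ|`, where `σᵢⱼ` are the entries of
`Σ − Σ̂`. -/
theorem allocation_utility_deviation_le
    {d : ℕ} (μ : Fin d → ℝ) (Sig SigHat : Matrix (Fin d) (Fin d) ℝ)
    (c : ℝ) (hc : 0 < c) (bhat : Fin d → ℝ) (hb : c ≤ bhat ⬝ᵥ μ) :
    |allocationUtility bhat μ SigHat - allocationUtility bhat μ Sig| ≤
      (1 / (2 * c ^ 2)) * (∑ i, |bhat i|) ^ 2 * ⨆ i, ∑ j, |(Sig - SigHat) i j| := by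
  set A := Sig - SigHat with hA
  set S := ⨆ i, ∑ j, |A i j| with hSdef
  have hbmu : (0:ℝ) < bhat ⬝ᵥ μ := lt_of_lt_of_le hc hb
  have hSle : ∀ i, ∑ j, |A i j| ≤ S := fun i =>
    le_ciSup (f := fun i => ∑ j, |A i j|) (Set.Finite.bddAbove (Set.finite_range _)) i
  have hS0 : 0 ≤ S := Real.iSup_nonneg fun i => Finset.sum_nonneg fun j _ => abs_nonneg _
  have hkey : |bhat ⬝ᵥ (A *ᵥ bhat)| ≤ (∑ i, |bhat i|) ^ 2 * S := by
    calc |bhat ⬝ᵥ (A *ᵥ bhat)| ≤ ∑ i, |bhat i * (A *ᵥ bhat) i| := by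
          rw [dotProduct]; exact Finset.abs_sum_le_sum_abs _ _
      _ ≤ ∑ i, |bhat i| * ((∑ k, |bhat k|) * S) := by
          apply Finset.sum_le_sum
          intro i _
          rw [abs_mul]
          apply mul_le_mul_of_nonneg_left _ (abs_nonneg _)
          calc |(A *ᵥ bhat) i| ≤ ∑ j, |A i j * bhat j| := by
                simp only [mulVec, dotProduct]
                exact Finset.abs_sum_le_sum_abs _ _
            _ ≤ ∑ j, |A i j| * (∑ k, |bhat k|) := by
                apply Finset.sum_le_sum; intro j _
                rw [abs_mul]
                exact mul_le_mul_of_nonneg_left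
                  (Finset.single_le_sum (f := fun k => |bhat k|) (fun k _ => abs_nonneg _) (Finset.mem_univ j))
                  (abs_nonneg _)
            _ = (∑ j, |A i j|) * (∑ k, |bhat k|) := by rw [← Finset.sum_mul]
            _ ≤ S * (∑ k, |bhat k|) :=
                mul_le_mul_of_nonneg_right (hSle i)
                  (Finset.sum_nonneg fun k _ => abs_nonneg _)
            _ = (∑ k, |bhat k|) * S := mul_comm _ _
      _ = (∑ i, |bhat i|) ^ 2 * S := by rw [← Finset.sum_mul, sq]; ring
  have hdiff : allocationUtility bhat μ SigHat - allocationUtility bhat μ Sig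
      = bhat ⬝ᵥ (A *ᵥ bhat) / (2 * (bhat ⬝ᵥ μ) ^ 2) := by
    unfold allocationUtility
    rw [hA, Matrix.sub_mulVec, dotProduct_sub]
    ring
  rw [hdiff, abs_div, abs_of_pos (by positivity : (0:ℝ) < 2 * (bhat ⬝ᵥ μ) ^ 2)]
  have hrhs : (1 / (2 * c ^ 2)) * (∑ i, |bhat i|) ^ 2 * S
      = ((∑ i, |bhat i|) ^ 2 * S) / (2 * c ^ 2) := by ring
  rw [hrhs]
  apply div_le_div₀ (by positivity) hkey (by positivity)
  have : c ^ 2 ≤ (bhat ⬝ᵥ μ) ^ 2 := by nlinarith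
  linarith
end
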